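/- arXiv:1911.11617 — 2 statements merged into one kernel-verified Lean document; each statement's English description precedes it below -/
import Mathlib

section
/- Let X be a locally hypercompact T0 space. Then every irreducible closed subset of X is the closure of a directed subset of X; consequently, in X the irreducible closed sets, the closed well-filtered determined sets, the closed Rudin sets and the closures of directed sets all coincide. -/
open Set

universe u

variable {α : Type u}

/-- The specialization order used in the paper: `x ≤ y` iff `x ∈ closure {y}`. -/
def specLE [TopologicalSpace α] (x y : α) : Prop := x ∈ closure ({y} : Set α)

/-- `↑x = {y | x ≤ y}` in the specialization order. -/
def upOf [TopologicalSpace α] (x : α) : Set α := {y | specLE x y}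

/-- `↑F = {y | ∃ a ∈ F, a ≤ y}` in the specialization order. -/
def upSetOf [TopologicalSpace α] (F : Set α) : Set α := {y | ∃ a ∈ F, specLE a y}

/-- `↓B = {x | ∃ b ∈ B, x ≤ b}` in the specialization order. -/
def downOf [TopologicalSpace α] (B : Set α) : Set α := {x | ∃ b ∈ B, specLE x b}

/-- A set directed with respect to the specialization order: nonempty, and any two
elements have an upper bound in it. -/
def SDirected [TopologicalSpace α] (D : Set α) : Prop :=
  D.Nonempty ∧ ∀ a ∈ D, ∀ b ∈ D, ∃ c ∈ D, specLE a c ∧ specLE b c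

/-- `s` is a supremum (least upper bound) of `D` in the specialization order. -/
def SIsSup [TopologicalSpace α] (D : Set α) (s : α) : Prop :=
  (∀ d ∈ D, specLE d s) ∧ ∀ t : α, (∀ d ∈ D, specLE d t) → specLE s t

/-- Upper set (= saturated set) in the specialization order. -/
def SUpper [TopologicalSpace α] (A : Set α) : Prop :=
  ∀ ⦃x y : α⦄, x ∈ A → specLE x y → y ∈ A

/-- Scott open set with respect to the specialization order. -/
def SScottOpen [TopologicalSpace α] (U : Set α) : Prop :=
  SUpper U ∧ ∀ D : Set α, SDirected D → ∀ s : α, SIsSup D s → s ∈ U → (D ∩ U).Nonempty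

/-- A d-space: a dcpo under the specialization order, all open sets Scott open. -/
def IsDSpace (α : Type u) [TopologicalSpace α] : Prop :=
  (∀ D : Set α, SDirected D → ∃ s : α, SIsSup D s) ∧
    ∀ U : Set α, IsOpen U → SScottOpen U

/-- Member of `K(X)`: nonempty, compact and saturated. -/
def IsKSet [TopologicalSpace α] (K : Set α) : Prop :=
  K.Nonempty ∧ IsCompact K ∧ SUpper K

/-- A filtered family of sets: nonempty, and any two members contain a common member. -/
def FilteredFam (𝒦 : Set (Set α)) : Prop :=
  𝒦.Nonempty ∧ ∀ K1 ∈ 𝒦, ∀ K2 ∈ 𝒦, ∃ K3 ∈ 𝒦, K3 ⊆ K1 ∩ K2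

/-- Well-filtered space: for every filtered family of nonempty compact saturated sets whose
intersection is contained in an open `U`, some member is contained in `U`. -/
def IsWellFiltered (α : Type u) [TopologicalSpace α] : Prop :=
  ∀ 𝒦 : Set (Set α), (∀ K ∈ 𝒦, IsKSet K) → FilteredFam 𝒦 →
    ∀ U : Set α, IsOpen U → ⋂₀ 𝒦 ⊆ U → ∃ K ∈ 𝒦, K ⊆ U

/-- Rudin set: a nonempty set `A` such that for some filtered family `𝒦 ⊆ K(X)`,
`closure A` is a minimal closed set meeting every member of `𝒦`. -/
def IsRudin [TopologicalSpace α] (A : Set α) : Prop :=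
  A.Nonempty ∧ ∃ 𝒦 : Set (Set α), (∀ K ∈ 𝒦, IsKSet K) ∧ FilteredFam 𝒦 ∧
    (∀ K ∈ 𝒦, (closure A ∩ K).Nonempty) ∧
    ∀ B : Set α, IsClosed B → B ⊆ closure A → (∀ K ∈ 𝒦, (B ∩ K).Nonempty) → B = closure A

/-- Well-filtered determined set: every continuous map into a well-filtered T0 space sends it
to a set whose closure is the closure of a unique point. -/
def IsWFD [TopologicalSpace α] (A : Set α) : Prop :=
  ∀ (Y : Type u) [TopologicalSpace Y] [T0Space Y], IsWellFiltered Y →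
    ∀ f : α → Y, Continuous f → ∃! y : Y, closure (f '' A) = closure ({y} : Set Y)

/-- Irreducible set. -/
def IsIrred [TopologicalSpace α] (A : Set α) : Prop :=
  A.Nonempty ∧ ∀ F1 F2 : Set α, IsClosed F1 → IsClosed F2 → A ⊆ F1 ∪ F2 → A ⊆ F1 ∨ A ⊆ F2

/-- Sober space: every irreducible closed set is the closure of a unique point. -/
def IsSober (α : Type u) [TopologicalSpace α] : Prop :=
  ∀ A : Set α, IsClosed A → IsIrred A → ∃! x : α, A = closure ({x} : Set α)

/-- `A` has a maximal element with respect to the specialization order. -/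
def HasMaxElem [TopologicalSpace α] (A : Set α) : Prop :=
  ∃ m ∈ A, ∀ a ∈ A, specLE m a → a = m

/-- Strong d-space. -/
def IsStrongDSpace (α : Type u) [TopologicalSpace α] : Prop :=
  ∀ D : Set α, SDirected D → ∀ x : α, ∀ U : Set α, IsOpen U →
    (⋂ d ∈ D, upOf d) ∩ upOf x ⊆ U → ∃ d ∈ D, upOf d ∩ upOf x ⊆ U

/-- Locally hypercompact space. -/
def LocallyHypercompact (α : Type u) [TopologicalSpace α] : Prop :=
  ∀ x : α, ∀ U : Set α, IsOpen U → x ∈ U →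
    ∃ F : Set α, F.Finite ∧ F.Nonempty ∧ x ∈ interior (upSetOf F) ∧ upSetOf F ⊆ U

/- Let `A` be irreducible and closed. Local hypercompactness provides the finite sets
`F` with `A ∩ int ↑F ≠ ∅`; irreducibility makes the sets `↑F` a filtered family, and `A` is a
minimal closed set meeting all of them, so `A` is a Rudin set. Rudin's lemma applied to the finite
sets `F ∩ A` yields a directed `D ⊆ A` meeting every `F`, and minimality forces `closure D = A`.
The closure of a directed set is well-filtered determined, since in a well-filtered space the
directed image has a point closure as closure (the sets `↑d` form a filtered family). Conversely,
Rudin sets and well-filtered determined sets are irreducible: for the latter, map to the finite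
space `Prop × Prop` to separate two closed sets. -/

section RudinLemma

theorem IsChain.sInter_inter_nonempty_of_finite {β : Type*} {c : Set (Set β)}
    (hc : IsChain (· ⊆ ·) c) (hcne : c.Nonempty) {G : Set β} (hG : G.Finite)
    (h : ∀ E ∈ c, (E ∩ G).Nonempty) :
    (⋂₀ c ∩ G).Nonempty := by
  have hfin : ((· ∩ G) '' c).Finite :=
    hG.finite_subsets.subset (by rintro _ ⟨E, -, rfl⟩; exact inter_subset_right)
  obtain ⟨_, ⟨⟨E₀, hE₀, rfl⟩, hmin⟩⟩ := hfin.exists_minimal (hcne.image _)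
  have hE₀_le : ∀ E ∈ c, E₀ ∩ G ⊆ E ∩ G := by
    intro E hE
    rcases hc.total hE₀ hE with h | h
    · exact inter_subset_inter_left _ h
    · exact hmin ⟨E, hE, rfl⟩ (inter_subset_inter_left _ h)
  obtain ⟨x, hx⟩ := h E₀ hE₀
  exact ⟨x, mem_sInter.2 fun E hE => (hE₀_le E hE hx).1, hx.2⟩

variable {β : Type*} [Preorder β] {𝒢 : Set (Set β)}

theorem Minimal.directedOn_of_smythFiltered
    (hfil : ∀ G₁ ∈ 𝒢, ∀ G₂ ∈ 𝒢, ∃ G₃ ∈ 𝒢,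
      (upperClosure G₃ : Set β) ⊆ upperClosure G₁ ∩ upperClosure G₂)
    {E : Set β} (hE : Minimal (fun E => IsLowerSet E ∧ ∀ G ∈ 𝒢, (E ∩ G).Nonempty) E) :
    DirectedOn (· ≤ ·) E := by
  obtain ⟨⟨hElower, hEmeets⟩, hEmin⟩ := hE
  -- otherwise the lower set `{e ∈ E | ¬ z ≤ e}` would be a smaller member
  have hup : ∀ z ∈ E, ∃ G ∈ 𝒢, ∀ e ∈ E ∩ G, z ≤ e := by
    intro z hz
    by_contra! h
    have hlower : IsLowerSet {e ∈ E | ¬ z ≤ e} :=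
      fun a b hba ha => ⟨hElower hba ha.1, fun hzb => ha.2 (hzb.trans hba)⟩
    have hmeets : ∀ G ∈ 𝒢, ({e ∈ E | ¬ z ≤ e} ∩ G).Nonempty := by
      intro G hG
      obtain ⟨e, he, hze⟩ := h G hG
      exact ⟨e, ⟨he.1, hze⟩, he.2⟩
    exact (hEmin ⟨hlower, hmeets⟩ (sep_subset _ _) hz).2 le_rfl
  intro x hx y hy
  obtain ⟨G₁, hG₁, hxG₁⟩ := hup x hx
  obtain ⟨G₂, hG₂, hyG₂⟩ := hup y hy
  obtain ⟨G₃, hG₃, hsub⟩ := hfil G₁ hG₁ G₂ hG₂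
  obtain ⟨e, heE, heG₃⟩ := hEmeets G₃ hG₃
  obtain ⟨⟨a, ha, hae⟩, ⟨b, hb, hbe⟩⟩ := hsub (subset_upperClosure heG₃)
  exact ⟨e, heE, (hxG₁ a ⟨hElower hae heE, ha⟩).trans hae,
    (hyG₂ b ⟨hElower hbe heE, hb⟩).trans hbe⟩

/-- Rudin's lemma. -/
theorem exists_directedOn_meeting_of_smythFiltered {A : Set β} (hA : IsLowerSet A)
    (h𝒢 : ∀ G ∈ 𝒢, G.Finite ∧ G.Nonempty ∧ G ⊆ A)
    (hfil : ∀ G₁ ∈ 𝒢, ∀ G₂ ∈ 𝒢, ∃ G₃ ∈ 𝒢,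
      (upperClosure G₃ : Set β) ⊆ upperClosure G₁ ∩ upperClosure G₂) :
    ∃ E ⊆ A, DirectedOn (· ≤ ·) E ∧ ∀ G ∈ 𝒢, (E ∩ G).Nonempty := by
  let S : Set (Set β) := {E | IsLowerSet E ∧ ∀ G ∈ 𝒢, (E ∩ G).Nonempty}
  have hAS : A ∈ S := by
    refine ⟨hA, fun G hG => ?_⟩
    obtain ⟨-, ⟨g, hg⟩, hGA⟩ := h𝒢 G hG
    exact ⟨g, hGA hg, hg⟩
  have hchain : ∀ c ⊆ S, IsChain (· ⊆ ·) c → c.Nonempty → ∃ lb ∈ S, ∀ E ∈ c, lb ⊆ E :=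
    fun c hc hchain hcne => ⟨⋂₀ c, ⟨isLowerSet_sInter fun E hE => (hc hE).1, fun G hG =>
      hchain.sInter_inter_nonempty_of_finite hcne (h𝒢 G hG).1 fun E hE => (hc hE).2 G hG⟩,
      fun _ => sInter_subset_of_mem⟩
  obtain ⟨E, hEA, hE⟩ := zorn_superset_nonempty S hchain A hAS
  exact ⟨E, hEA, hE.directedOn_of_smythFiltered hfil, hE.prop.2⟩

end RudinLemma

section Specialization

variable [TopologicalSpace α] {x y z : α}

theorem specLE_iff_specializes : specLE x y ↔ y ⤳ x := specializes_iff_mem_closure.symm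

theorem specLE_refl (x : α) : specLE x x := specLE_iff_specializes.2 specializes_rfl

theorem specLE.trans (h₁ : specLE x y) (h₂ : specLE y z) : specLE x z :=
  specLE_iff_specializes.2 ((specLE_iff_specializes.1 h₂).trans (specLE_iff_specializes.1 h₁))

theorem specLE.map {β : Type*} [TopologicalSpace β] {f : α → β} (hf : Continuous f)
    (h : specLE x y) : specLE (f x) (f y) :=
  specLE_iff_specializes.2 ((specLE_iff_specializes.1 h).map hf)

theorem IsOpen.sUpper {U : Set α} (hU : IsOpen U) : SUpper U :=
  fun _ _ hx hxy => (specLE_iff_specializes.1 hxy).mem_open hU hx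

theorem IsClosed.mem_of_specLE {C : Set α} (hC : IsClosed C) (h : specLE x y) (hy : y ∈ C) :
    x ∈ C :=
  (specLE_iff_specializes.1 h).mem_closed hC hy

theorem subset_upSetOf (F : Set α) : F ⊆ upSetOf F := fun a ha => ⟨a, ha, specLE_refl a⟩

theorem sUpper_upSetOf (F : Set α) : SUpper (upSetOf F) :=
  fun _ _ ⟨a, ha, hax⟩ hxy => ⟨a, ha, hax.trans hxy⟩

theorem IsOpen.upSetOf_subset {U F : Set α} (hU : IsOpen U) (hFU : F ⊆ U) : upSetOf F ⊆ U :=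
  fun _ ⟨_, ha, hay⟩ => hU.sUpper (hFU ha) hay

theorem Set.Finite.isCompact_upSetOf {F : Set α} (hF : F.Finite) : IsCompact (upSetOf F) := by
  refine isCompact_of_finite_subcover fun U hU hcov => ?_
  obtain ⟨t, ht⟩ := hF.isCompact.elim_finite_subcover U hU ((subset_upSetOf F).trans hcov)
  exact ⟨t, (isOpen_biUnion fun i _ => hU i).upSetOf_subset ht⟩

theorem Set.Finite.isKSet_upSetOf {F : Set α} (hF : F.Finite) (hne : F.Nonempty) :
    IsKSet (upSetOf F) :=
  ⟨hne.mono (subset_upSetOf F), hF.isCompact_upSetOf, sUpper_upSetOf F⟩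

theorem isIrred_iff_isIrreducible {A : Set α} : IsIrred A ↔ IsIrreducible A :=
  and_congr_right fun _ => isPreirreducible_iff_isClosed_union_isClosed.symm

theorem SDirected.image {β : Type*} [TopologicalSpace β] {D : Set α} (hD : SDirected D)
    {f : α → β} (hf : Continuous f) : SDirected (f '' D) := by
  refine ⟨hD.1.image f, ?_⟩
  rintro - ⟨a, ha, rfl⟩ - ⟨b, hb, rfl⟩
  obtain ⟨c, hc, hac, hbc⟩ := hD.2 a ha b hb
  exact ⟨f c, mem_image_of_mem f hc, hac.map hf, hbc.map hf⟩

theorem SDirected.isIrreducible_closure {D : Set α} (hD : SDirected D) :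
    IsIrreducible (closure D) := by
  refine isIrreducible_iff_closure.2 ⟨hD.1, fun U V hU hV ⟨a, ha, haU⟩ ⟨b, hb, hbV⟩ => ?_⟩
  obtain ⟨c, hc, hac, hbc⟩ := hD.2 a ha b hb
  exact ⟨c, hc, hU.sUpper haU hac, hV.sUpper hbV hbc⟩

end Specialization

section MinimalClosedMeeting

variable [TopologicalSpace α]

def IsMinimalClosedMeeting (𝒦 : Set (Set α)) (A : Set α) : Prop :=
  (∀ K ∈ 𝒦, (A ∩ K).Nonempty) ∧
    ∀ B : Set α, IsClosed B → B ⊆ A → (∀ K ∈ 𝒦, (B ∩ K).Nonempty) → B = A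

theorem IsMinimalClosedMeeting.isIrreducible {𝒦 : Set (Set α)} {A : Set α} (hA : IsClosed A)
    (h𝒦 : FilteredFam 𝒦) (h : IsMinimalClosedMeeting 𝒦 A) : IsIrreducible A := by
  obtain ⟨K₀, hK₀⟩ := h𝒦.1
  refine ⟨(h.1 K₀ hK₀).mono inter_subset_left,
    isPreirreducible_iff_isClosed_union_isClosed.2 fun F₁ F₂ hF₁ hF₂ hsub => ?_⟩
  by_contra! hnot
  -- a closed set `A ∩ Fᵢ` strictly smaller than `A` misses some member of `𝒦`
  have hmiss : ∀ F, IsClosed F → ¬ A ⊆ F → ∃ K ∈ 𝒦, ¬ (A ∩ F ∩ K).Nonempty := by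
    intro F hF hAF
    by_contra! hmeets
    exact hAF ((h.2 _ (hA.inter hF) inter_subset_left hmeets).symm.subset.trans
      inter_subset_right)
  obtain ⟨K₁, hK₁, hK₁miss⟩ := hmiss F₁ hF₁ hnot.1
  obtain ⟨K₂, hK₂, hK₂miss⟩ := hmiss F₂ hF₂ hnot.2
  obtain ⟨K₃, hK₃, hK₃sub⟩ := h𝒦.2 K₁ hK₁ K₂ hK₂
  obtain ⟨x, hxA, hxK₃⟩ := h.1 K₃ hK₃
  rcases hsub hxA with hx | hx
  · exact hK₁miss ⟨x, ⟨hxA, hx⟩, (hK₃sub hxK₃).1⟩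
  · exact hK₂miss ⟨x, ⟨hxA, hx⟩, (hK₃sub hxK₃).2⟩

theorem IsClosed.upSetOf_inter_subset {A F F' : Set α} (hA : IsClosed A)
    (h : upSetOf F' ⊆ upSetOf F) : upSetOf (F' ∩ A) ⊆ upSetOf (F ∩ A) := by
  rintro y ⟨a, ⟨haF', haA⟩, hay⟩
  obtain ⟨b, hbF, hba⟩ := h (subset_upSetOf F' haF')
  exact ⟨b, ⟨hbF, hA.mem_of_specLE hba haA⟩, hba.trans hay⟩

theorem IsMinimalClosedMeeting.exists_sDirected_closure_eq {𝒻 : Set (Set α)} {A : Set α}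
    (hA : IsClosed A) (h𝒻 : ∀ F ∈ 𝒻, F.Finite) (hfil : FilteredFam (upSetOf '' 𝒻))
    (h : IsMinimalClosedMeeting (upSetOf '' 𝒻) A) :
    ∃ D : Set α, SDirected D ∧ A = closure D := by
  -- Rudin's lemma is applied in the specialization preorder, where `a ≤ b ↔ specLE a b`
  let _ : Preorder α := specializationPreorder α
  have hupper : ∀ G : Set α, (upperClosure G : Set α) = upSetOf G := fun G => by
    ext y
    simp only [SetLike.mem_coe, mem_upperClosure, upSetOf, mem_ofPred_eq, specLE_iff_specializes]
    rfl
  have h𝒢 : ∀ G ∈ (· ∩ A) '' 𝒻, G.Finite ∧ G.Nonempty ∧ G ⊆ A := by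
    rintro _ ⟨F, hF, rfl⟩
    obtain ⟨x, hxA, a, haF, hax⟩ := h.1 _ (mem_image_of_mem _ hF)
    exact ⟨(h𝒻 F hF).inter_of_left A, ⟨a, haF, hA.mem_of_specLE hax hxA⟩, inter_subset_right⟩
  have h𝒢fil : ∀ G₁ ∈ (· ∩ A) '' 𝒻, ∀ G₂ ∈ (· ∩ A) '' 𝒻, ∃ G₃ ∈ (· ∩ A) '' 𝒻,
      (upperClosure G₃ : Set α) ⊆ upperClosure G₁ ∩ upperClosure G₂ := by
    rintro _ ⟨F₁, hF₁, rfl⟩ _ ⟨F₂, hF₂, rfl⟩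
    obtain ⟨_, ⟨F₃, hF₃, rfl⟩, hsub⟩ :=
      hfil.2 _ (mem_image_of_mem _ hF₁) _ (mem_image_of_mem _ hF₂)
    simp only [hupper]
    exact ⟨_, mem_image_of_mem _ hF₃, subset_inter
      (hA.upSetOf_inter_subset (hsub.trans inter_subset_left))
      (hA.upSetOf_inter_subset (hsub.trans inter_subset_right))⟩
  obtain ⟨E, hEA, hEdir, hEmeets⟩ := exists_directedOn_meeting_of_smythFiltered
    (fun _ _ hba ha => (hA.mem_of_specLE (specLE_iff_specializes.2 hba) ha)) h𝒢 h𝒢fil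
  obtain ⟨_, F₀, hF₀, rfl⟩ := hfil.1
  have hEne : E.Nonempty := (hEmeets _ (mem_image_of_mem _ hF₀)).mono inter_subset_left
  have hcl : closure E = A := by
    refine h.2 _ isClosed_closure (closure_minimal hEA hA) ?_
    rintro _ ⟨F, hF, rfl⟩
    obtain ⟨e, heE, heF, -⟩ := hEmeets _ (mem_image_of_mem _ hF)
    exact ⟨e, subset_closure heE, subset_upSetOf F heF⟩
  refine ⟨E, ⟨hEne, fun a ha b hb => ?_⟩, hcl.symm⟩
  obtain ⟨c, hc, hac, hbc⟩ := hEdir a ha b hb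
  exact ⟨c, hc, specLE_iff_specializes.2 hac, specLE_iff_specializes.2 hbc⟩

theorem IsIrreducible.exists_isMinimalClosedMeeting_upSetOf (hlc : LocallyHypercompact α)
    {A : Set α} (hirr : IsIrreducible A) :
    ∃ 𝒻 : Set (Set α), (∀ F ∈ 𝒻, F.Finite ∧ F.Nonempty) ∧ FilteredFam (upSetOf '' 𝒻) ∧
      IsMinimalClosedMeeting (upSetOf '' 𝒻) A := by
  set 𝒻 : Set (Set α) := {F | F.Finite ∧ F.Nonempty ∧ (A ∩ interior (upSetOf F)).Nonempty}
  have hlocal : ∀ x ∈ A, ∀ U, IsOpen U → x ∈ U →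
      ∃ F ∈ 𝒻, x ∈ interior (upSetOf F) ∧ upSetOf F ⊆ U := by
    intro x hxA U hU hxU
    obtain ⟨F, hFfin, hFne, hxF, hFU⟩ := hlc x U hU hxU
    exact ⟨F, ⟨hFfin, hFne, x, hxA, hxF⟩, hxF, hFU⟩
  obtain ⟨x₀, hx₀⟩ := hirr.nonempty
  obtain ⟨F₀, hF₀, -⟩ := hlocal x₀ hx₀ univ isOpen_univ trivial
  refine ⟨𝒻, fun F hF => ⟨hF.1, hF.2.1⟩, ⟨⟨_, mem_image_of_mem _ hF₀⟩, ?_⟩, ?_, ?_⟩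
  · rintro _ ⟨F₁, hF₁, rfl⟩ _ ⟨F₂, hF₂, rfl⟩
    obtain ⟨x, hxA, hx⟩ :=
      hirr.isPreirreducible _ _ isOpen_interior isOpen_interior hF₁.2.2 hF₂.2.2
    obtain ⟨F₃, hF₃, -, hF₃sub⟩ := hlocal x hxA _ (isOpen_interior.inter isOpen_interior) hx
    exact ⟨_, mem_image_of_mem _ hF₃,
      hF₃sub.trans (inter_subset_inter interior_subset interior_subset)⟩
  · rintro _ ⟨F, ⟨-, -, x, hxA, hxF⟩, rfl⟩
    exact ⟨x, hxA, interior_subset hxF⟩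
  · intro B hB hBA hBmeets
    refine hBA.antisymm fun x hxA => ?_
    by_contra hxB
    obtain ⟨F, hF, -, hFB⟩ := hlocal x hxA Bᶜ hB.isOpen_compl hxB
    obtain ⟨b, hbB, hbF⟩ := hBmeets _ (mem_image_of_mem _ hF)
    exact hFB hbF hbB

theorem IsIrreducible.isRudin (hlc : LocallyHypercompact α) {A : Set α} (hA : IsClosed A)
    (hirr : IsIrreducible A) : IsRudin A := by
  obtain ⟨𝒻, h𝒻, hfil, hmin⟩ := hirr.exists_isMinimalClosedMeeting_upSetOf hlc
  rw [← hA.closure_eq] at hmin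
  refine ⟨hirr.nonempty, _, ?_, hfil, hmin⟩
  rintro _ ⟨F, hF, rfl⟩
  exact (h𝒻 F hF).1.isKSet_upSetOf (h𝒻 F hF).2

theorem IsIrreducible.exists_sDirected_closure_eq (hlc : LocallyHypercompact α) {A : Set α}
    (hA : IsClosed A) (hirr : IsIrreducible A) : ∃ D : Set α, SDirected D ∧ A = closure D := by
  obtain ⟨𝒻, h𝒻, hfil, hmin⟩ := hirr.exists_isMinimalClosedMeeting_upSetOf hlc
  exact hmin.exists_sDirected_closure_eq hA (fun F hF => (h𝒻 F hF).1) hfil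

theorem IsRudin.isIrreducible {A : Set α} (hA : IsClosed A) (h : IsRudin A) :
    IsIrreducible A := by
  obtain ⟨-, 𝒦, -, hfil, hmin⟩ := h
  rw [hA.closure_eq] at hmin
  exact IsMinimalClosedMeeting.isIrreducible hA hfil hmin

end MinimalClosedMeeting

section WellFiltered

variable {Y : Type u} [TopologicalSpace Y]

theorem isWellFiltered_of_finite [Finite Y] : IsWellFiltered Y := by
  intro 𝒦 _ hfil U _ hU
  obtain ⟨K₀, hK₀, hK₀min⟩ := (Set.toFinite 𝒦).exists_minimal hfil.1
  have hK₀sub : ∀ K ∈ 𝒦, K₀ ⊆ K := by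
    intro K hK
    obtain ⟨K₃, hK₃, hK₃sub⟩ := hfil.2 K₀ hK₀ K hK
    have := hK₀min hK₃ (hK₃sub.trans inter_subset_left)
    exact (this.trans hK₃sub).trans inter_subset_right
  exact ⟨K₀, hK₀, fun y hy => hU (mem_sInter.2 fun K hK => hK₀sub K hK hy)⟩

theorem IsWellFiltered.exists_closure_eq_closure_singleton (hwf : IsWellFiltered Y) {D : Set Y}
    (hD : SDirected D) : ∃ s : Y, closure D = closure {s} := by
  have hK : ∀ K ∈ upOf '' D, IsKSet K := by
    rintro _ ⟨d, -, rfl⟩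
    simpa [upSetOf, upOf] using (finite_singleton d).isKSet_upSetOf (singleton_nonempty d)
  have hfil : FilteredFam (upOf '' D) := by
    refine ⟨hD.1.image _, ?_⟩
    rintro _ ⟨d₁, hd₁, rfl⟩ _ ⟨d₂, hd₂, rfl⟩
    obtain ⟨c, hc, h₁, h₂⟩ := hD.2 d₁ hd₁ d₂ hd₂
    exact ⟨upOf c, mem_image_of_mem _ hc, fun z hz => ⟨h₁.trans hz, h₂.trans hz⟩⟩
  -- the common upper bounds of `D` cannot all avoid the closed set `closure D`
  obtain ⟨s, hsD, hs⟩ : (closure D ∩ ⋂₀ (upOf '' D)).Nonempty := by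
    by_contra! h
    obtain ⟨_, ⟨d, hd, rfl⟩, hdU⟩ := hwf _ hK hfil _ isClosed_closure.isOpen_compl
      fun s hs hsD => h.subset ⟨hsD, hs⟩
    exact hdU (specLE_refl d) (subset_closure hd)
  refine ⟨s, (closure_minimal (fun d hd => ?_) isClosed_closure).antisymm
    (closure_minimal (singleton_subset_iff.2 hsD) isClosed_closure)⟩
  exact hs _ (mem_image_of_mem _ hd)

end WellFiltered

section WellFilteredDetermined

variable [TopologicalSpace α]

theorem SDirected.isWFD_closure {D : Set α} (hD : SDirected D) : IsWFD (closure D) := by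
  intro Y _ _ hwf f hf
  obtain ⟨s, hs⟩ := hwf.exists_closure_eq_closure_singleton (hD.image hf)
  rw [closure_image_closure hf, hs]
  exact ⟨s, rfl, fun y hy => (inseparable_iff_closure_eq.2 hy.symm).eq⟩

theorem IsWFD.isIrreducible {A : Set α} (hA : IsWFD A) : IsIrreducible A := by
  have himage : ∀ f : α → ULift.{u} Prop × ULift.{u} Prop, Continuous f →
      IsIrreducible (f '' A) := by
    intro f hf
    obtain ⟨y, hy, -⟩ := hA _ isWellFiltered_of_finite f hf
    exact isIrreducible_iff_closure.1 (hy ▸ isIrreducible_singleton.closure)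
  refine ⟨(himage (fun _ => (⟨True⟩, ⟨True⟩)) continuous_const).nonempty.of_image,
    isPreirreducible_iff_isClosed_union_isClosed.2 fun F₁ F₂ hF₁ hF₂ hsub => ?_⟩
  -- `F₁` and `F₂` are the preimages of the closed sets `{p | ¬ p.1}` and `{p | ¬ p.2}`
  let f : α → ULift.{u} Prop × ULift.{u} Prop := fun x => (⟨x ∉ F₁⟩, ⟨x ∉ F₂⟩)
  have hf : Continuous f :=
    (continuous_uliftUp.comp (continuous_Prop.2 hF₁.isOpen_compl)).prodMk
      (continuous_uliftUp.comp (continuous_Prop.2 hF₂.isOpen_compl))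
  have hopen : IsOpen {q : Prop | q} := continuous_Prop.1 continuous_id
  have hclosed : ∀ g : ULift.{u} Prop × ULift.{u} Prop → ULift.{u} Prop, Continuous g →
      IsClosed {p | ¬ (g p).down} :=
    fun g hg => (hopen.preimage (continuous_uliftDown.comp hg)).isClosed_compl
  have hcover : f '' A ⊆ {p | ¬ p.1.down} ∪ {p | ¬ p.2.down} := by
    rintro _ ⟨a, ha, rfl⟩
    simpa [f] using hsub ha
  refine (isPreirreducible_iff_isClosed_union_isClosed.1 (himage f hf).isPreirreducible _ _
    (hclosed _ continuous_fst) (hclosed _ continuous_snd) hcover).imp ?_ ?_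
  all_goals exact fun h a ha => not_not.1 (h (mem_image_of_mem f ha))

end WellFilteredDetermined

theorem stmt_7_general (α : Type u) [TopologicalSpace α]
    (hlc : LocallyHypercompact α) :
    (∀ A : Set α, IsClosed A → IsIrred A → ∃ D : Set α, SDirected D ∧ A = closure D) ∧
    {A : Set α | IsClosed A ∧ IsIrred A} = {A : Set α | IsClosed A ∧ IsWFD A} ∧
    {A : Set α | IsClosed A ∧ IsIrred A} = {A : Set α | IsClosed A ∧ IsRudin A} ∧
    {A : Set α | IsClosed A ∧ IsIrred A} =
      {A : Set α | ∃ D : Set α, SDirected D ∧ A = closure D} := by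
  simp only [isIrred_iff_isIrreducible]
  have hdc (A : Set α) (hA : IsClosed A) (hirr : IsIrreducible A) :
      ∃ D : Set α, SDirected D ∧ A = closure D :=
    hirr.exists_sDirected_closure_eq hlc hA
  refine ⟨hdc, ?_, ?_, ?_⟩
  · ext A
    refine ⟨fun ⟨hA, hirr⟩ => ⟨hA, ?_⟩, fun ⟨hA, hwfd⟩ => ⟨hA, hwfd.isIrreducible⟩⟩
    obtain ⟨D, hD, rfl⟩ := hdc A hA hirr
    exact hD.isWFD_closure
  · ext A
    exact ⟨fun ⟨hA, hirr⟩ => ⟨hA, hirr.isRudin hlc hA⟩, fun ⟨hA, h⟩ => ⟨hA, h.isIrreducible hA⟩⟩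
  · ext A
    refine ⟨fun ⟨hA, hirr⟩ => hdc A hA hirr, ?_⟩
    rintro ⟨D, hD, rfl⟩
    exact ⟨isClosed_closure, hD.isIrreducible_closure⟩

/-- in a locally hypercompact T0 space, every irreducible closed set is the
closure of a directed set, and irreducible closed sets, closed well-filtered determined sets,
closed Rudin sets and closures of directed sets coincide. -/
theorem stmt_7 (α : Type u) [TopologicalSpace α] [T0Space α]
    (hlc : LocallyHypercompact α) :
    (∀ A : Set α, IsClosed A → IsIrred A → ∃ D : Set α, SDirected D ∧ A = closure D) ∧
    {A : Set α | IsClosed A ∧ IsIrred A} = {A : Set α | IsClosed A ∧ IsWFD A} ∧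
    {A : Set α | IsClosed A ∧ IsIrred A} = {A : Set α | IsClosed A ∧ IsRudin A} ∧
    {A : Set α | IsClosed A ∧ IsIrred A} =
      {A : Set α | ∃ D : Set α, SDirected D ∧ A = closure D} :=
  stmt_7_general α hlc
end

section
/- For a T0 space X, the following are equivalent: (1) X is a strong d-space; (2) for every directed subset D of X, every nonempty finite subset F of X, and every open set U, if ⋂_{d∈D} ↑d ∩ ↑F ⊆ U then ↑d ∩ ↑F ⊆ U for some d ∈ D. -/
open Set

universe u

variable {α : Type u}

/-! Writing `↑F` as the union of the `↑a` for `a ∈ F`, the hypothesis for `↑F` splits into one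
hypothesis for each `↑a`, the strong d-space property yields some `d_a ∈ D` for each of them, and
directedness of `D` provides a single `d` above the finitely many `d_a`. -/

section StrongDSpace

variable [TopologicalSpace α]

lemma specLE_trans {x y z : α} (hxy : specLE x y) (hyz : specLE y z) : specLE x z :=
  specializes_iff_mem_closure.1
    ((specializes_iff_mem_closure.2 hyz).trans (specializes_iff_mem_closure.2 hxy))

lemma upOf_antitone {a b : α} (h : specLE a b) : upOf b ⊆ upOf a :=
  fun _ hy => specLE_trans h hy

lemma upSetOf_eq_biUnion (F : Set α) : upSetOf F = ⋃ a ∈ F, upOf a := by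
  ext y
  simp [upSetOf, upOf]

lemma upSetOf_singleton (x : α) : upSetOf {x} = upOf x := by
  simp [upSetOf_eq_biUnion]

lemma SDirected.exists_forall_of_finite {β : Type*} {D : Set α} (hD : SDirected D) {F : Set β}
    (hF : F.Finite) {P : β → α → Prop} (hP : ∀ b d c, P b d → specLE d c → P b c)
    (h : ∀ b ∈ F, ∃ d ∈ D, P b d) : ∃ d ∈ D, ∀ b ∈ F, P b d := by
  induction F, hF using Set.Finite.induction_on with
  | empty =>
    obtain ⟨d, hd⟩ := hD.1
    exact ⟨d, hd, fun _ hb => absurd hb (notMem_empty _)⟩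
  | @insert a G _ _ ih =>
    obtain ⟨d, hd, hdG⟩ := ih fun b hb => h b (mem_insert_of_mem a hb)
    obtain ⟨e, he, hea⟩ := h a (mem_insert a G)
    obtain ⟨c, hc, hdc, hec⟩ := hD.2 d hd e he
    exact ⟨c, hc, forall_mem_insert.2 ⟨hP a e c hea hec, fun b hb => hP b d c (hdG b hb) hdc⟩⟩

theorem IsStrongDSpace.exists_upOf_inter_upSetOf_subset (hs : IsStrongDSpace α) {D : Set α}
    (hD : SDirected D) {F : Set α} (hF : F.Finite) {U : Set α} (hU : IsOpen U)
    (hDF : (⋂ d ∈ D, upOf d) ∩ upSetOf F ⊆ U) : ∃ d ∈ D, upOf d ∩ upSetOf F ⊆ U := by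
  simp only [upSetOf_eq_biUnion, inter_iUnion₂, iUnion₂_subset_iff] at hDF ⊢
  exact hD.exists_forall_of_finite hF
    (fun _ _ _ hd hdc => (inter_subset_inter_left _ (upOf_antitone hdc)).trans hd)
    fun a ha => hs D hD a U hU (hDF a ha)

end StrongDSpace

theorem stmt_15_general (α : Type u) [TopologicalSpace α] :
    IsStrongDSpace α ↔
      ∀ D : Set α, SDirected D → ∀ F : Set α, F.Finite → F.Nonempty →
        ∀ U : Set α, IsOpen U → (⋂ d ∈ D, upOf d) ∩ upSetOf F ⊆ U →
          ∃ d ∈ D, upOf d ∩ upSetOf F ⊆ U := by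
  refine ⟨fun hs D hD F hF _ U hU => hs.exists_upOf_inter_upSetOf_subset hD hF hU, ?_⟩
  intro h D hD x U hU
  simpa only [upSetOf_singleton] using h D hD {x} (finite_singleton x) (singleton_nonempty x) U hU

/-- strong d-spaces via finite sets. -/
theorem stmt_15 (α : Type u) [TopologicalSpace α] [T0Space α] :
    IsStrongDSpace α ↔
      ∀ D : Set α, SDirected D → ∀ F : Set α, F.Finite → F.Nonempty →
        ∀ U : Set α, IsOpen U → (⋂ d ∈ D, upOf d) ∩ upSetOf F ⊆ U →
          ∃ d ∈ D, upOf d ∩ upSetOf F ⊆ U :=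
  stmt_15_general α
end
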